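/- Let $\delta>0$ and let $K:\mathbb{R}^3\times\mathbb{R}^3\to\mathbb{C}$ satisfy $|K(x,y)|\lesssim \min\{\langle x\rangle^{-1}\langle y\rangle^{-1}\langle |x|-|y|\rangle^{-2},\ \langle |x|-|y|\rangle^{-3-\delta}\}$. Then $T_K$ is bounded on $L^p(\mathbb{R}^3)$ for all $1\le p\le\infty$. -/

import Mathlib

open MeasureTheory Real
open scoped ENNReal NNReal

noncomputable section

abbrev E3 := EuclideanSpace ℝ (Fin 3)

/-- Japanese bracket `⟨x⟩ = (1+|x|²)^{1/2}` of a point of `ℝ³`. -/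
def jb (x : E3) : ℝ := Real.sqrt (1 + ‖x‖ ^ 2)

/-- Japanese bracket of a real number. -/
def jbR (s : ℝ) : ℝ := Real.sqrt (1 + s ^ 2)

/-!
Schur's test: if `∫ |K(x,y)| dy` and `∫ |K(x,y)| dx` are bounded uniformly by `M`, then `T_K`
has norm at most `M` on every `Lᵖ`; for `1 < p < ∞` apply Hölder's inequality against the
measure `|K(x,y)| dy`, then Tonelli. The bound on `K` is symmetric in `x, y` and depends only on
`a = |x|` and `r = |y|`, so in polar coordinates it suffices to dominate `r² · min(…)` by an
integrable function of `a - r`. If `r ≤ 2⟨a⟩` then `r² ≤ 2⟨a⟩⟨r⟩`, and the first term of the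
min leaves `2⟨a - r⟩⁻²`; if `r > 2⟨a⟩` then `r ≤ 2⟨a - r⟩`, and the second leaves
`4⟨a - r⟩^{-1-δ}`, integrable since `δ > 0`.
-/

open Function Metric Set

section SchurTest

variable {α β : Type*} [MeasurableSpace α] [MeasurableSpace β] {μ : Measure α} {ν : Measure β}

lemma lintegral_mul_rpow_le {k F : β → ℝ≥0∞} (hk : AEMeasurable k ν) (hF : AEMeasurable F ν)
    {p : ℝ} (hp : 1 ≤ p) :
    (∫⁻ y, k y * F y ∂ν) ^ p ≤ (∫⁻ y, k y ∂ν) ^ (p - 1) * ∫⁻ y, k y * F y ^ p ∂ν := by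
  have hp0 : 0 < p := by linarith
  have hq : 0 ≤ 1 - p⁻¹ := sub_nonneg.2 (inv_le_one_of_one_le₀ hp)
  have hsplit : ∀ y, k y ^ (1 - p⁻¹) * (k y * F y ^ p) ^ p⁻¹ = k y * F y := fun y => by
    rw [ENNReal.mul_rpow_of_nonneg _ _ (by positivity), ENNReal.rpow_rpow_inv hp0.ne', ← mul_assoc,
      ← ENNReal.rpow_add_of_nonneg _ _ hq (by positivity), sub_add_cancel, ENNReal.rpow_one]
  have hholder := ENNReal.lintegral_mul_norm_pow_le hk (hk.mul (hF.pow_const p)) hq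
    (inv_nonneg.2 hp0.le) (sub_add_cancel 1 p⁻¹)
  calc (∫⁻ y, k y * F y ∂ν) ^ p
      = (∫⁻ y, k y ^ (1 - p⁻¹) * (k y * F y ^ p) ^ p⁻¹ ∂ν) ^ p := by simp_rw [hsplit]
    _ ≤ ((∫⁻ y, k y ∂ν) ^ (1 - p⁻¹) * (∫⁻ y, k y * F y ^ p ∂ν) ^ p⁻¹) ^ p :=
        ENNReal.rpow_le_rpow hholder hp0.le
    _ = (∫⁻ y, k y ∂ν) ^ (p - 1) * ∫⁻ y, k y * F y ^ p ∂ν := by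
        rw [ENNReal.mul_rpow_of_nonneg _ _ hp0.le, ENNReal.rpow_inv_rpow hp0.ne',
          ← ENNReal.rpow_mul, sub_mul, one_mul, inv_mul_cancel₀ hp0.ne']

lemma lintegral_lintegral_mul_le_of_lintegral_le [SFinite μ] [SFinite ν] {k : α → β → ℝ≥0∞}
    (hk : Measurable (uncurry k)) {M : ℝ≥0∞} (col : ∀ y, ∫⁻ x, k x y ∂μ ≤ M) {G : β → ℝ≥0∞}
    (hG : AEMeasurable G ν) :
    ∫⁻ x, ∫⁻ y, k x y * G y ∂ν ∂μ ≤ M * ∫⁻ y, G y ∂ν := by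
  rw [lintegral_lintegral_swap (hk.aemeasurable.mul hG.comp_snd)]
  calc ∫⁻ y, ∫⁻ x, k x y * G y ∂μ ∂ν
      = ∫⁻ y, (∫⁻ x, k x y ∂μ) * G y ∂ν := by
        simp_rw [lintegral_mul_const _ hk.of_uncurry_right]
    _ ≤ ∫⁻ y, M * G y ∂ν := lintegral_mono fun y => mul_le_mul_left (col y) _
    _ = M * ∫⁻ y, G y ∂ν := lintegral_const_mul'' M hG

lemma lintegral_rpow_lintegral_kernel_le [SFinite μ] [SFinite ν] {k : α → β → ℝ≥0∞}
    (hk : Measurable (uncurry k)) {M : ℝ≥0∞} (row : ∀ x, ∫⁻ y, k x y ∂ν ≤ M)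
    (col : ∀ y, ∫⁻ x, k x y ∂μ ≤ M) {F : β → ℝ≥0∞} (hF : AEMeasurable F ν) {p : ℝ} (hp : 1 ≤ p) :
    ∫⁻ x, (∫⁻ y, k x y * F y ∂ν) ^ p ∂μ ≤ M ^ p * ∫⁻ y, F y ^ p ∂ν := by
  have hFp : AEMeasurable (fun y => F y ^ p) ν := hF.pow_const p
  calc ∫⁻ x, (∫⁻ y, k x y * F y ∂ν) ^ p ∂μ
      ≤ ∫⁻ x, M ^ (p - 1) * ∫⁻ y, k x y * F y ^ p ∂ν ∂μ := lintegral_mono fun x =>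
        (lintegral_mul_rpow_le hk.of_uncurry_left.aemeasurable hF hp).trans
          (mul_le_mul_left (ENNReal.rpow_le_rpow (row x) (by linarith)) _)
    _ = M ^ (p - 1) * ∫⁻ x, ∫⁻ y, k x y * F y ^ p ∂ν ∂μ :=
        lintegral_const_mul'' _ (hk.aemeasurable.mul hFp.comp_snd).lintegral_prod_right
    _ ≤ M ^ (p - 1) * (M * ∫⁻ y, F y ^ p ∂ν) :=
        mul_le_mul_right (lintegral_lintegral_mul_le_of_lintegral_le hk col hFp) _
    _ = M ^ p * ∫⁻ y, F y ^ p ∂ν := by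
        have hMp : M ^ (p - 1) * M = M ^ p := by
          simpa using (ENNReal.rpow_add_of_nonneg (x := M) _ _ (sub_nonneg.2 hp) zero_le_one).symm
        rw [← mul_assoc, hMp]

lemma eLpNormEssSup_lintegral_kernel_le {k : α → β → ℝ≥0∞} (hk : ∀ x, Measurable (k x))
    {M : ℝ≥0∞} (row : ∀ x, ∫⁻ y, k x y ∂ν ≤ M) (F : β → ℝ≥0∞) :
    eLpNormEssSup (fun x => ∫⁻ y, k x y * F y ∂ν) μ ≤ M * eLpNormEssSup F ν := by
  refine eLpNormEssSup_le_of_ae_enorm_bound (ae_of_all _ fun x => ?_)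
  calc ∫⁻ y, k x y * F y ∂ν ≤ ∫⁻ y, k x y * eLpNormEssSup F ν ∂ν :=
        lintegral_mono_ae (ae_le_eLpNormEssSup.mono fun y hy => mul_le_mul_right hy _)
    _ = (∫⁻ y, k x y ∂ν) * eLpNormEssSup F ν := lintegral_mul_const _ (hk x)
    _ ≤ M * eLpNormEssSup F ν := mul_le_mul_left (row x) _

lemma eLpNorm_lintegral_kernel_le [SFinite μ] [SFinite ν] {k : α → β → ℝ≥0∞}
    (hk : Measurable (uncurry k)) {M : ℝ≥0∞} (row : ∀ x, ∫⁻ y, k x y ∂ν ≤ M)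
    (col : ∀ y, ∫⁻ x, k x y ∂μ ≤ M) {F : β → ℝ≥0∞} (hF : AEMeasurable F ν) {p : ℝ≥0∞}
    (hp : 1 ≤ p) :
    eLpNorm (fun x => ∫⁻ y, k x y * F y ∂ν) p μ ≤ M * eLpNorm F p ν := by
  rcases eq_or_ne p ∞ with rfl | hp_top
  · simpa only [eLpNorm_exponent_top] using
      eLpNormEssSup_lintegral_kernel_le (fun _ => hk.of_uncurry_left) row F
  have hp0 : p ≠ 0 := (zero_lt_one.trans_le hp).ne'
  have hpr : 1 ≤ p.toReal := by simpa using ENNReal.toReal_mono hp_top hp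
  simp only [eLpNorm_eq_lintegral_rpow_enorm_toReal hp0 hp_top, enorm_eq_self]
  calc (∫⁻ x, (∫⁻ y, k x y * F y ∂ν) ^ p.toReal ∂μ) ^ (1 / p.toReal)
      ≤ (M ^ p.toReal * ∫⁻ y, F y ^ p.toReal ∂ν) ^ (1 / p.toReal) :=
        ENNReal.rpow_le_rpow (lintegral_rpow_lintegral_kernel_le hk row col hF hpr) (by positivity)
    _ = M * (∫⁻ y, F y ^ p.toReal ∂ν) ^ (1 / p.toReal) := by
        rw [ENNReal.mul_rpow_of_nonneg _ _ (by positivity), one_div,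
          ENNReal.rpow_rpow_inv (by positivity)]

lemma eLpNorm_integral_kernel_le [SFinite μ] [SFinite ν] {𝕜 : Type*} [NormedDivisionRing 𝕜]
    [NormedSpace ℝ 𝕜] [MeasurableSpace 𝕜] [OpensMeasurableSpace 𝕜] {K : α → β → 𝕜}
    (hK : Measurable (uncurry K)) {M : ℝ≥0∞}
    (row : ∀ x, ∫⁻ y, ‖K x y‖ₑ ∂ν ≤ M) (col : ∀ y, ∫⁻ x, ‖K x y‖ₑ ∂μ ≤ M) {f : β → 𝕜}
    (hf : AEStronglyMeasurable f ν) {p : ℝ≥0∞} (hp : 1 ≤ p) :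
    eLpNorm (fun x => ∫ y, K x y * f y ∂ν) p μ ≤ M * eLpNorm f p ν :=
  calc eLpNorm (fun x => ∫ y, K x y * f y ∂ν) p μ
      ≤ eLpNorm (fun x => ∫⁻ y, ‖K x y‖ₑ * ‖f y‖ₑ ∂ν) p μ := eLpNorm_mono_enorm fun x => by
        simpa only [enorm_mul, enorm_eq_self] using
          enorm_integral_le_lintegral_enorm (fun y => K x y * f y)
    _ ≤ M * eLpNorm (fun y => ‖f y‖ₑ) p ν :=
        eLpNorm_lintegral_kernel_le hK.enorm row col hf.enorm hp
    _ = M * eLpNorm f p ν := by rw [eLpNorm_enorm]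

end SchurTest

lemma lintegral_enorm_le_ofReal_integral {β F : Type*} [MeasurableSpace β] {ν : Measure β}
    [NormedAddCommGroup F] {g : β → F} {h : β → ℝ} (hh : Integrable h ν)
    (hgh : ∀ y, ‖g y‖ ≤ h y) :
    ∫⁻ y, ‖g y‖ₑ ∂ν ≤ ENNReal.ofReal (∫ y, h y ∂ν) := by
  rw [ofReal_integral_eq_lintegral_ofReal hh (ae_of_all _ fun y => (norm_nonneg _).trans (hgh y))]
  exact lintegral_mono fun y => by rw [← ofReal_norm]; exact ENNReal.ofReal_le_ofReal (hgh y)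

lemma jbR_pos (s : ℝ) : 0 < jbR s := Real.sqrt_pos.2 (by positivity)

lemma jbR_sq (s : ℝ) : jbR s ^ 2 = 1 + s ^ 2 := Real.sq_sqrt (by positivity)

lemma abs_le_jbR (s : ℝ) : |s| ≤ jbR s := by
  rw [jbR, ← Real.sqrt_sq_eq_abs]
  exact Real.sqrt_le_sqrt (by linarith)

lemma le_jbR (s : ℝ) : s ≤ jbR s := (le_abs_self s).trans (abs_le_jbR s)

lemma jbR_sub_comm (a b : ℝ) : jbR (a - b) = jbR (b - a) := by
  rw [jbR, jbR, ← neg_sub, neg_sq]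

lemma measurable_jbR : Measurable jbR := by unfold jbR; fun_prop

lemma jbR_rpow (s c : ℝ) : jbR s ^ c = (1 + s ^ 2) ^ (c / 2) := by
  rw [jbR, Real.sqrt_eq_rpow, ← Real.rpow_mul (by positivity), one_div, inv_mul_eq_div]

def radialBound (δ a r : ℝ) : ℝ :=
  min ((jbR a)⁻¹ * (jbR r)⁻¹ * (jbR (a - r) ^ 2)⁻¹) (jbR (a - r) ^ (-(3 + δ)))

lemma radialBound_nonneg (δ a r : ℝ) : 0 ≤ radialBound δ a r := by
  have := jbR_pos a; have := jbR_pos r; have := jbR_pos (a - r)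
  unfold radialBound; positivity

lemma radialBound_comm (δ a r : ℝ) : radialBound δ a r = radialBound δ r a := by
  rw [radialBound, radialBound, jbR_sub_comm, mul_comm (jbR a)⁻¹]

lemma measurable_radialBound (δ a : ℝ) : Measurable (radialBound δ a) := by
  have := measurable_jbR
  unfold radialBound; fun_prop

def radialMajorant (δ s : ℝ) : ℝ := 2 * (jbR s ^ 2)⁻¹ + 4 * jbR s ^ (-(1 + δ))

lemma radialMajorant_nonneg (δ s : ℝ) : 0 ≤ radialMajorant δ s := by
  have := jbR_pos s
  unfold radialMajorant; positivity

lemma integrable_radialMajorant {δ : ℝ} (hδ : 0 < δ) : Integrable (radialMajorant δ) := by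
  have h₁ : Integrable fun s => (jbR s ^ 2)⁻¹ := by
    simpa only [jbR_sq] using integrable_inv_one_add_sq
  have h₂ : Integrable fun s => jbR s ^ (-(1 + δ)) := by
    simpa only [jbR_rpow, Real.norm_eq_abs, sq_abs] using
      integrable_rpow_neg_one_add_norm_sq (E := ℝ) (r := 1 + δ) (by simp; linarith)
  exact (h₁.const_mul 2).add (h₂.const_mul 4)

lemma sq_mul_radialBound_le_of_le (δ : ℝ) {a r : ℝ} (hr : 0 ≤ r) (h : r ≤ 2 * jbR a) :
    r ^ 2 * radialBound δ a r ≤ 2 * (jbR (a - r) ^ 2)⁻¹ := by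
  have hA := jbR_pos a
  have hR := jbR_pos r
  have hr2 : r ^ 2 ≤ 2 * (jbR a * jbR r) := by nlinarith [le_jbR r]
  calc r ^ 2 * radialBound δ a r
      ≤ r ^ 2 * ((jbR a)⁻¹ * (jbR r)⁻¹ * (jbR (a - r) ^ 2)⁻¹) := by
        gcongr; exact min_le_left _ _
    _ = r ^ 2 / (jbR a * jbR r) * (jbR (a - r) ^ 2)⁻¹ := by field_simp
    _ ≤ 2 * (jbR (a - r) ^ 2)⁻¹ := by
        gcongr; exact (div_le_iff₀ (by positivity)).2 hr2

lemma sq_mul_radialBound_le_of_lt (δ : ℝ) {a r : ℝ} (ha : 0 ≤ a) (h : 2 * jbR a < r) :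
    r ^ 2 * radialBound δ a r ≤ 4 * jbR (a - r) ^ (-(1 + δ)) := by
  have hD := jbR_pos (a - r)
  have hr2 : r ^ 2 ≤ 4 * jbR (a - r) ^ 2 := by
    have : r - a ≤ jbR (a - r) := by rw [jbR_sub_comm]; exact le_jbR _
    nlinarith [le_jbR a]
  have hsplit : jbR (a - r) ^ (-(3 + δ)) = (jbR (a - r) ^ 2)⁻¹ * jbR (a - r) ^ (-(1 + δ)) := by
    rw [show -(3 + δ) = -(2 : ℝ) + -(1 + δ) by ring, Real.rpow_add hD, Real.rpow_neg hD.le,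
      Real.rpow_two]
  calc r ^ 2 * radialBound δ a r ≤ r ^ 2 * jbR (a - r) ^ (-(3 + δ)) := by
        gcongr; exact min_le_right _ _
    _ = r ^ 2 / jbR (a - r) ^ 2 * jbR (a - r) ^ (-(1 + δ)) := by rw [hsplit]; ring
    _ ≤ 4 * jbR (a - r) ^ (-(1 + δ)) := by
        gcongr; exact (div_le_iff₀ (by positivity)).2 hr2

lemma sq_mul_radialBound_le (δ : ℝ) {a r : ℝ} (ha : 0 ≤ a) (hr : 0 ≤ r) :
    r ^ 2 * radialBound δ a r ≤ radialMajorant δ (a - r) := by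
  have h₁ : 0 ≤ 2 * (jbR (a - r) ^ 2)⁻¹ := by have := jbR_pos (a - r); positivity
  have h₂ : 0 ≤ 4 * jbR (a - r) ^ (-(1 + δ)) := by have := jbR_pos (a - r); positivity
  rcases le_or_gt r (2 * jbR a) with h | h
  · exact (sq_mul_radialBound_le_of_le δ hr h).trans (le_add_of_nonneg_right h₂)
  · exact (sq_mul_radialBound_le_of_lt δ ha h).trans (le_add_of_nonneg_left h₁)

lemma sq_mul_radialBound_ae_le (δ : ℝ) {a : ℝ} (ha : 0 ≤ a) :
    ∀ᵐ r ∂volume.restrict (Ioi 0), ‖r ^ 2 * radialBound δ a r‖ ≤ radialMajorant δ (a - r) := by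
  refine (ae_restrict_iff' measurableSet_Ioi).2 (ae_of_all _ fun r (hr : 0 < r) => ?_)
  rw [Real.norm_of_nonneg (by have := radialBound_nonneg δ a r; positivity)]
  exact sq_mul_radialBound_le δ ha hr.le

lemma integrableOn_sq_mul_radialBound {δ : ℝ} (hδ : 0 < δ) {a : ℝ} (ha : 0 ≤ a) :
    IntegrableOn (fun r => r ^ 2 * radialBound δ a r) (Ioi 0) :=
  Integrable.mono' ((integrable_radialMajorant hδ).comp_sub_left a).integrableOn
    (by have := measurable_radialBound δ a; fun_prop) (sq_mul_radialBound_ae_le δ ha)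

lemma setIntegral_sq_mul_radialBound_le {δ : ℝ} (hδ : 0 < δ) {a : ℝ} (ha : 0 ≤ a) :
    ∫ r in Ioi 0, r ^ 2 * radialBound δ a r ≤ ∫ s, radialMajorant δ s :=
  calc ∫ r in Ioi 0, r ^ 2 * radialBound δ a r
      ≤ ∫ r in Ioi 0, radialMajorant δ (a - r) :=
        integral_mono_ae (integrableOn_sq_mul_radialBound hδ ha)
          ((integrable_radialMajorant hδ).comp_sub_left a).integrableOn
          ((sq_mul_radialBound_ae_le δ ha).mono fun _ hr => (le_abs_self _).trans hr)
    _ ≤ ∫ r, radialMajorant δ (a - r) :=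
        setIntegral_le_integral ((integrable_radialMajorant hδ).comp_sub_left a)
          (ae_of_all _ fun _ => radialMajorant_nonneg δ _)
    _ = ∫ s, radialMajorant δ s := integral_sub_left_eq_self _ _ a

section Dimension3

variable {E : Type*} [NormedAddCommGroup E] [NormedSpace ℝ E] [FiniteDimensional ℝ E]
  [MeasurableSpace E] [BorelSpace E] (μ : Measure E) [μ.IsAddHaarMeasure]

lemma integrable_radialBound_norm (hE : Module.finrank ℝ E = 3) {δ : ℝ} (hδ : 0 < δ) (x : E) :
    Integrable (fun y => radialBound δ ‖x‖ ‖y‖) μ := by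
  have : Nontrivial E := Module.nontrivial_of_finrank_eq_succ hE
  rw [integrable_fun_norm_addHaar μ (f := radialBound δ ‖x‖), hE]
  simpa only [smul_eq_mul] using integrableOn_sq_mul_radialBound hδ (norm_nonneg x)

lemma integral_radialBound_norm_le (hE : Module.finrank ℝ E = 3) {δ : ℝ} (hδ : 0 < δ) (x : E) :
    ∫ y, radialBound δ ‖x‖ ‖y‖ ∂μ ≤ 3 * μ.real (ball 0 1) * ∫ s, radialMajorant δ s := by
  have : Nontrivial E := Module.nontrivial_of_finrank_eq_succ hE
  rw [integral_fun_norm_addHaar μ (radialBound δ ‖x‖), hE, nsmul_eq_mul, smul_eq_mul,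
    Nat.cast_ofNat, ← mul_assoc]
  refine mul_le_mul_of_nonneg_left ?_ (by positivity)
  simpa only [smul_eq_mul] using setIntegral_sq_mul_radialBound_le hδ (norm_nonneg x)

lemma lintegral_enorm_le_of_norm_le_radialBound (hE : Module.finrank ℝ E = 3) {δ : ℝ}
    (hδ : 0 < δ) {F : Type*} [NormedAddCommGroup F] {K : E → E → F} {C : ℝ}
    (hK : ∀ x y, ‖K x y‖ ≤ C * radialBound δ ‖x‖ ‖y‖) (x : E) :
    ∫⁻ y, ‖K x y‖ₑ ∂μ ≤
      ENNReal.ofReal (|C| * (3 * μ.real (ball 0 1) * ∫ s, radialMajorant δ s)) := by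
  refine (lintegral_enorm_le_ofReal_integral
    ((integrable_radialBound_norm μ hE hδ x).const_mul |C|) fun y => (hK x y).trans ?_).trans
    (ENNReal.ofReal_le_ofReal ?_)
  · exact mul_le_mul_of_nonneg_right (le_abs_self C) (radialBound_nonneg δ _ _)
  · rw [integral_const_mul]
    exact mul_le_mul_of_nonneg_left (integral_radialBound_norm_le μ hE hδ x) (abs_nonneg C)

end Dimension3

/-- If `|K(x,y)| ≲ min{⟨x⟩⁻¹⟨y⟩⁻¹⟨|x|-|y|⟩⁻², ⟨|x|-|y|⟩^{-3-δ}}` for some `δ > 0`, then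
`T_K` is bounded on `L^p(ℝ³)` for all `1 ≤ p ≤ ∞`. -/
theorem kernel_min_bound_Lp_bounded (δ : ℝ) (hδ : 0 < δ) (K : E3 → E3 → ℂ)
    (hmeas : Measurable (Function.uncurry K))
    (hK : ∃ C : ℝ, ∀ x y : E3, ‖K x y‖ ≤
      C * min ((jb x)⁻¹ * (jb y)⁻¹ * ((jbR (‖x‖ - ‖y‖)) ^ 2)⁻¹)
              ((jbR (‖x‖ - ‖y‖)) ^ (-(3 + δ)))) :
    ∀ p : ℝ≥0∞, 1 ≤ p → ∃ C : ℝ≥0, ∀ f : E3 → ℂ, MemLp f p volume →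
      eLpNorm (fun x : E3 => ∫ y : E3, K x y * f y) p volume ≤ C * eLpNorm f p volume := by
  obtain ⟨C, hC⟩ := hK
  have hrow : ∀ x y : E3, ‖K x y‖ ≤ C * radialBound δ ‖x‖ ‖y‖ := hC
  have hcol : ∀ y x : E3, ‖K x y‖ ≤ C * radialBound δ ‖y‖ ‖x‖ := fun y x => by
    rw [radialBound_comm]; exact hC x y
  have hE : Module.finrank ℝ E3 = 3 := finrank_euclideanSpace_fin
  intro p hp
  refine ⟨(ENNReal.ofReal
    (|C| * (3 * volume.real (ball (0 : E3) 1) * ∫ s, radialMajorant δ s))).toNNReal, fun f hf => ?_⟩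
  rw [ENNReal.coe_toNNReal ENNReal.ofReal_ne_top]
  exact eLpNorm_integral_kernel_le hmeas
    (lintegral_enorm_le_of_norm_le_radialBound volume hE hδ hrow)
    (lintegral_enorm_le_of_norm_le_radialBound volume hE hδ hcol) hf.1 hp
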